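/- For all integers m_1, …, m_k (k ≥ 1) there exists an integer c such that I(m_1, …, m_k) = c · I(m_1 + … + m_k). In particular, since I(m) = n if m ≡ 0 (mod n) and I(m) = 0 otherwise, one has I(m_1, …, m_k) = 0 whenever m_1 + … + m_k ≢ 0 (mod n). -/

import Mathlib

open Finset

noncomputable section

/-- The exponential sum `I(m_1, …, m_k) = ∑ exp(2πi(m_1 j_1 + … + m_k j_k)/n)`,
the sum being taken over all `k`-tuples `(j_1, …, j_k)` of pairwise distinct
elements of `ℤ/nℤ` (represented by `Fin n`). -/
def expSum (n : ℕ) (k : ℕ) (m : Fin k → ℤ) : ℂ :=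
  ∑ t ∈ Finset.univ.filter (fun t : Fin k → Fin n => Function.Injective t),
    Complex.exp (2 * Real.pi * Complex.I * (∑ i, (m i : ℂ) * ((t i : ℕ) : ℂ)) / n)

/-!
Splitting off the first coordinate `j₁` of an injective tuple and subtracting the tuples in
which `j₁` collides with some later `jᵢ` gives the recursion
`I(m₁, …, m_k) = I(m₁) I(m₂, …, m_k) - ∑_{i ≥ 2} I(m₂, …, mᵢ + m₁, …, m_k)`,
in which every term has the same total `m₁ + ⋯ + m_k`. As `I(a)` is `n` or `0` according as
`n ∣ a` or not, `I(a) I(b)` is an integer multiple of `I(a + b)`, and induction on `k` concludes.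
The recursion only uses that `a ↦ (j ↦ exp(2πi a j / n))` is an additive character.
-/

lemma prod_apply_mul_mulSingle {ι β M : Type*} [Fintype ι] [DecidableEq ι] [CommMonoid M]
    (g : ι → β → M) (i : ι) (h : β → M) (s : ι → β) :
    ∏ j, (g * Pi.mulSingle i h : ι → β → M) j (s j) = h (s i) * ∏ j, g j (s j) := by
  simp only [Pi.mul_apply, prod_mul_distrib]
  simp [Pi.mulSingle_apply, ite_apply, mul_comm]

section InjSum

variable {α R : Type*} [Fintype α] [DecidableEq α] [CommRing R]

variable (α) in
def injTuples (k : ℕ) : Finset (Fin k → α) :=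
  univ.filter Function.Injective

lemma mem_injTuples {k : ℕ} {t : Fin k → α} : t ∈ injTuples α k ↔ t.Injective := by
  simp [injTuples]

def injSum {k : ℕ} (f : Fin k → α → R) : R :=
  ∑ t ∈ injTuples α k, ∏ i, f i (t i)

lemma injSum_one (f : Fin 1 → α → R) : injSum f = ∑ x, f 0 x := by
  rw [injSum, injTuples, filter_true_of_mem fun t _ => Function.injective_of_subsingleton t]
  exact Fintype.sum_equiv (Equiv.funUnique (Fin 1) α) _ _ fun t => by simp

lemma injSum_succ_eq_sum_notMem_range {k : ℕ} (f : Fin (k + 1) → α → R) :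
    injSum f = ∑ x, ∑ s ∈ (injTuples α k).filter (x ∉ Set.range ·),
      f 0 x * ∏ i, Fin.tail f i (s i) := by
  rw [injSum, injTuples, sum_filter, ← (Fin.consEquiv fun _ => α).sum_comp,
    Fintype.sum_prod_type]
  refine sum_congr rfl fun x _ => ?_
  rw [injTuples, filter_filter, sum_filter]
  refine sum_congr rfl fun s _ => ?_
  change ite (Fin.cons x s : Fin (k + 1) → α).Injective _ _ = _
  simp only [Fin.cons_injective_iff, Fin.prod_univ_succ, Fin.consEquiv_apply, Fin.cons_zero,
    Fin.cons_succ, Fin.tail, and_comm]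

lemma sum_sum_filter_mem_range {k : ℕ} (g : α → R) (P : (Fin k → α) → R) :
    ∑ x, ∑ s ∈ (injTuples α k).filter (x ∈ Set.range ·), g x * P s =
      ∑ i, ∑ s ∈ injTuples α k, g (s i) * P s := by
  simp_rw [sum_filter (s := injTuples α k)]
  rw [sum_comm, sum_comm (s := univ)]
  refine sum_congr rfl fun s hs => ?_
  rw [← sum_filter]
  have hrange : univ.filter (· ∈ Set.range s) = univ.image s := by ext; simp
  rw [hrange, sum_image fun _ _ _ _ h => mem_injTuples.1 hs h]

lemma injSum_succ {k : ℕ} (f : Fin (k + 1) → α → R) :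
    injSum f = (∑ x, f 0 x) * injSum (Fin.tail f) -
      ∑ i, injSum (Fin.tail f * Pi.mulSingle i (f 0)) := by
  have hsplit (x : α) (g : (Fin k → α) → R) :
      ∑ s ∈ (injTuples α k).filter (x ∉ Set.range ·), g s =
        ∑ s ∈ injTuples α k, g s -
          ∑ s ∈ (injTuples α k).filter (x ∈ Set.range ·), g s :=
    eq_sub_of_add_eq' (sum_filter_add_sum_filter_not _ _ _)
  rw [injSum_succ_eq_sum_notMem_range, sum_congr rfl fun x _ => hsplit x _, sum_sub_distrib,
    sum_sum_filter_mem_range, sum_mul]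
  simp only [injSum, ← mul_sum, prod_apply_mul_mulSingle]

section AddChar

variable {A : Type*} [AddCommMonoid A]

lemma AddChar.comp_add_single {ι M : Type*} [DecidableEq ι] [CommMonoid M] (ψ : AddChar A M)
    (m : ι → A) (i : ι) (b : A) :
    ψ ∘ (m + Pi.single i b) = ψ ∘ m * Pi.mulSingle i (ψ b) := by
  ext j
  by_cases h : j = i
  · subst h; simp [AddChar.map_add_eq_mul]
  · simp [h]

lemma injSum_addChar_succ {k : ℕ} (ψ : AddChar A (α → R)) (m : Fin (k + 1) → A) :
    injSum (ψ ∘ m) = (∑ x, ψ (m 0) x) * injSum (ψ ∘ Fin.tail m) -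
      ∑ i, injSum (ψ ∘ (Fin.tail m + Pi.single i (m 0))) := by
  simp only [injSum_succ, AddChar.comp_add_single]
  rfl

theorem exists_injSum_addChar_eq_int_mul (ψ : AddChar A (α → R))
    (hψ : ∀ a b, ∃ c : ℤ, (∑ x, ψ a x) * ∑ x, ψ b x = c * ∑ x, ψ (a + b) x) :
    ∀ {k : ℕ} (m : Fin (k + 1) → A),
      ∃ c : ℤ, injSum (ψ ∘ m) = c * ∑ x, ψ (∑ i, m i) x
  | 0, m => ⟨1, by simp [injSum_one]⟩
  | k + 1, m => by
    obtain ⟨c₀, hc₀⟩ := exists_injSum_addChar_eq_int_mul ψ hψ (Fin.tail m)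
    choose c hc using fun i ↦
      exists_injSum_addChar_eq_int_mul ψ hψ (Fin.tail m + Pi.single i (m 0))
    obtain ⟨d, hd⟩ := hψ (m 0) (∑ i, Fin.tail m i)
    have hsum (i) : ∑ j, (Fin.tail m + Pi.single i (m 0) : Fin (k + 1) → A) j = ∑ j, m j := by
      simp [sum_add_distrib, Fin.sum_univ_succ (f := m), Fin.tail, add_comm]
    rw [show m 0 + ∑ i, Fin.tail m i = ∑ i, m i from (Fin.sum_univ_succ m).symm] at hd
    refine ⟨d * c₀ - ∑ i, c i, ?_⟩
    simp only [injSum_addChar_succ, hc₀, hc, hsum, ← sum_mul]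
    push_cast
    linear_combination (c₀ : R) * hd

end AddChar

end InjSum

lemma IsPrimitiveRoot.geom_sum_zpow_eq_ite {K : Type*} [Field K] {ζ : K} {n : ℕ}
    (hζ : IsPrimitiveRoot ζ n) (a : ℤ) :
    ∑ j ∈ range n, (ζ ^ a) ^ j = if (n : ℤ) ∣ a then (n : K) else 0 := by
  split_ifs with h
  · simp [(hζ.zpow_eq_one_iff_dvd a).2 h]
  · have hne : ζ ^ a ≠ 1 := mt (hζ.zpow_eq_one_iff_dvd a).1 h
    have hpow : (ζ ^ a) ^ n = 1 := by
      rw [← zpow_natCast, ← zpow_mul, mul_comm, zpow_mul, hζ.zpow_eq_one, one_zpow]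
    rw [geom_sum_eq hne, hpow, sub_self, zero_div]

def expChar (n : ℕ) : AddChar ℤ (Fin n → ℂ) where
  toFun a j := Complex.exp (2 * Real.pi * Complex.I * a * (j : ℕ) / n)
  map_zero_eq_one' := by ext; simp
  map_add_eq_mul' a b := by
    ext j
    simp only [Pi.mul_apply, ← Complex.exp_add]
    congr 1
    push_cast
    ring

lemma expChar_apply (n : ℕ) (a : ℤ) (j : Fin n) :
    expChar n a j = (Complex.exp (2 * Real.pi * Complex.I / n) ^ a) ^ (j : ℕ) := by
  rw [← Complex.exp_int_mul, ← Complex.exp_nat_mul]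
  change Complex.exp _ = _
  congr 1
  ring

lemma sum_expChar (n : ℕ) (a : ℤ) :
    ∑ j, expChar n a j = if (n : ℤ) ∣ a then (n : ℂ) else 0 := by
  rcases eq_or_ne n 0 with rfl | hn
  · simp
  simp only [expChar_apply]
  rw [Fin.sum_univ_eq_sum_range fun j => (Complex.exp (2 * Real.pi * Complex.I / n) ^ a) ^ j]
  exact (Complex.isPrimitiveRoot_exp n hn).geom_sum_zpow_eq_ite a

lemma exists_sum_expChar_mul_eq (n : ℕ) (a b : ℤ) :
    ∃ c : ℤ,
      (∑ j, expChar n a j) * ∑ j, expChar n b j = c * ∑ j, expChar n (a + b) j := by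
  simp only [sum_expChar]
  by_cases ha : (n : ℤ) ∣ a
  · by_cases hb : (n : ℤ) ∣ b
    · exact ⟨n, by simp [ha, hb, dvd_add ha hb]⟩
    · exact ⟨0, by simp [hb]⟩
  · exact ⟨0, by simp [ha]⟩

lemma expSum_eq_injSum (n k : ℕ) (m : Fin k → ℤ) :
    expSum n k m = injSum (expChar n ∘ m) := by
  refine sum_congr rfl fun t _ => ?_
  rw [mul_sum, sum_div, Complex.exp_sum]
  refine prod_congr rfl fun i _ => ?_
  change _ = Complex.exp _
  congr 1
  ring

lemma expSum_one (n : ℕ) (a : ℤ) :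
    expSum n 1 (fun _ => a) = if (n : ℤ) ∣ a then (n : ℂ) else 0 := by
  rw [expSum_eq_injSum, injSum_one]
  exact sum_expChar n a

theorem expSum_eq_int_mul_general (n : ℕ) (k : ℕ) (hk : 1 ≤ k) (m : Fin k → ℤ) :
    (∃ c : ℤ, expSum n k m = (c : ℂ) * expSum n 1 (fun _ => ∑ i, m i)) ∧
      (¬ (n : ℤ) ∣ ∑ i, m i → expSum n k m = 0) := by
  obtain ⟨k, rfl⟩ : ∃ k', k = k' + 1 := ⟨k - 1, by omega⟩
  have hmul : ∃ c : ℤ, expSum n (k + 1) m = c * expSum n 1 (fun _ => ∑ i, m i) := by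
    rw [expSum_eq_injSum, expSum_eq_injSum, injSum_one]
    exact exists_injSum_addChar_eq_int_mul _ (exists_sum_expChar_mul_eq n) m
  refine ⟨hmul, fun hndvd => ?_⟩
  obtain ⟨c, hc⟩ := hmul
  rw [hc, expSum_one, if_neg hndvd, mul_zero]

/-- There is an integer `c` with `I(m_1, …, m_k) = c · I(m_1 + … + m_k)`; in particular
`I(m_1, …, m_k) = 0` whenever `m_1 + … + m_k ≢ 0 (mod n)`. -/
theorem expSum_eq_int_mul (n : ℕ) (hn : 3 ≤ n) (k : ℕ) (hk : 1 ≤ k) (m : Fin k → ℤ) :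
    (∃ c : ℤ, expSum n k m = (c : ℂ) * expSum n 1 (fun _ => ∑ i, m i)) ∧
      (¬ (n : ℤ) ∣ ∑ i, m i → expSum n k m = 0) :=
  expSum_eq_int_mul_general n k hk m
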